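/- Let μ be the Bernoulli product probability measure on ℝ^ℕ, namely the countable product over n ∈ ℕ of the measure (δ₋₁ + δ₁)/2 on ℝ (so the coordinates are independent random variables taking the values ±1 with probability 1/2 each). Then for a sequence f : ℕ → ℝ, the partial sums S_N(x) = Σ_{n < N} f(n)·x(n) converge (to a finite limit) for μ-almost every x ∈ ℝ^ℕ if and only if Σ_n f(n)² < ∞, i.e., if and only if f ∈ ℓ². Thus the linear measurable functionals on (ℝ^ℕ, μ) given by coordinate series are exactly those with coefficient sequence in ℓ². -/

import Mathlib

open MeasureTheory ProbabilityTheory Filter Topology Finset Real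
open scoped ENNReal

/-!
If `∑ a n ^ 2 < ∞`, the partial sums of `∑ a n * X n` (with `X n` independent signs) form a
martingale whose second moments are bounded by `∑ a n ^ 2`; it is therefore bounded in `L¹` and
converges almost everywhere.

Conversely, the characteristic function of a partial sum is `∏ n < N, cos (a n * t)`. If the
series converges a.e. to `Z`, these products converge to the characteristic function of `Z`,
which is continuous and equals `1` at `0`. Hence for `|t| ≤ δ` every product
`∏ n < N, cos (a n * t) ^ 2` stays above `1 / 4`. This first forces `|a n * δ| < π / 2`; then
`cos x ^ 2 ≤ exp (-sin x ^ 2)` and Jordan's inequality `2 / π * |x| ≤ |sin x|` bound the partial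
sums of `∑ a n ^ 2`.
-/

lemma prod_cos_sq_le_exp_neg_sum_sin_sq {ι : Type*} (s : Finset ι) (x : ι → ℝ) :
    ∏ i ∈ s, cos (x i) ^ 2 ≤ exp (-∑ i ∈ s, sin (x i) ^ 2) := by
  rw [← sum_neg_distrib, exp_sum]
  refine prod_le_prod (fun i _ ↦ sq_nonneg _) fun i _ ↦ ?_
  rw [cos_sq']
  linarith [add_one_le_exp (-sin (x i) ^ 2)]

lemma sq_le_prod_cos_sq_of_tendsto {x : ℕ → ℝ} {L : ℝ}
    (h : Tendsto (fun N ↦ ∏ n ∈ range N, cos (x n)) atTop (𝓝 L)) (N : ℕ) :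
    L ^ 2 ≤ ∏ n ∈ range N, cos (x n) ^ 2 := by
  have hanti : Antitone fun N ↦ ∏ n ∈ range N, cos (x n) ^ 2 := by
    refine antitone_nat_of_succ_le fun N ↦ ?_
    rw [prod_range_succ]
    exact mul_le_of_le_one_right (prod_nonneg fun _ _ ↦ sq_nonneg _) (cos_sq_le_one _)
  exact hanti.le_of_tendsto (by simpa only [prod_pow] using h.pow 2) N

lemma summable_sq_of_tendsto_prod_cos {a : ℕ → ℝ} {φ : ℝ → ℝ} (hφ : ContinuousAt φ 0)
    (hφ0 : φ 0 = 1) (h : ∀ t, Tendsto (fun N ↦ ∏ n ∈ range N, cos (a n * t)) atTop (𝓝 (φ t))) :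
    Summable fun n ↦ a n ^ 2 := by
  obtain ⟨δ, hδ, hφδ⟩ : ∃ δ > 0, ∀ t, |t| ≤ δ → 1 / 2 ≤ φ t := by
    obtain ⟨ε, hε, hφε⟩ := Metric.eventually_nhds_iff.1
      (hφ.eventually (eventually_ge_nhds (by norm_num [hφ0] : (1 / 2 : ℝ) < φ 0)))
    refine ⟨ε / 2, half_pos hε, fun t ht ↦ hφε ?_⟩
    rw [Real.dist_0_eq_abs]
    linarith
  have hprod (t : ℝ) (ht : |t| ≤ δ) (N : ℕ) : 1 / 4 ≤ ∏ n ∈ range N, cos (a n * t) ^ 2 :=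
    le_trans (by nlinarith [hφδ t ht]) (sq_le_prod_cos_sq_of_tendsto (h t) N)
  -- Otherwise some `|t| ≤ δ` makes `a n * t = π / 2` and kills the `n`-th factor.
  have hsmall (n : ℕ) : |a n * δ| < π / 2 := by
    by_contra! hn
    have han : a n ≠ 0 := by
      rintro h0
      rw [h0, zero_mul, abs_zero] at hn
      linarith [pi_pos]
    have hcos := hprod (π / 2 / a n) ?_ (n + 1)
    · rw [prod_range_succ, mul_div_cancel₀ _ han, cos_pi_div_two] at hcos
      norm_num at hcos
    rw [abs_div, abs_of_pos (by positivity), div_le_iff₀ (abs_pos.2 han)]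
    rwa [abs_mul, abs_of_pos hδ, mul_comm] at hn
  have hsin (n : ℕ) : (2 / π * δ) ^ 2 * a n ^ 2 ≤ sin (a n * δ) ^ 2 :=
    calc (2 / π * δ) ^ 2 * a n ^ 2 = (2 / π * |a n * δ|) ^ 2 := by rw [mul_pow _ |_|, sq_abs]; ring
      _ ≤ |sin (a n * δ)| ^ 2 :=
        pow_le_pow_left₀ (by positivity) (mul_abs_le_abs_sin (hsmall n).le) 2
      _ = sin (a n * δ) ^ 2 := sq_abs _
  have hsum (N : ℕ) : ∑ n ∈ range N, sin (a n * δ) ^ 2 ≤ log 4 := by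
    have := (hprod δ (abs_of_pos hδ).le N).trans (prod_cos_sq_le_exp_neg_sum_sin_sq _ _)
    have := log_le_log (by norm_num) this
    rw [log_exp, one_div, log_inv] at this
    linarith
  refine summable_of_sum_range_le (c := log 4 / (2 / π * δ) ^ 2) (fun n ↦ sq_nonneg _)
    fun N ↦ ?_
  rw [le_div_iff₀ (by positivity), sum_mul]
  exact (sum_le_sum fun n _ ↦ by linarith [hsin n]).trans (hsum N)

noncomputable def rademacher : Measure ℝ :=
  (2⁻¹ : ℝ≥0∞) • (Measure.dirac (-1) + Measure.dirac 1)

instance : IsProbabilityMeasure rademacher := by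
  constructor
  simp [rademacher, ← two_mul, ENNReal.mul_inv_cancel]

lemma ae_rademacher : ∀ᵐ x ∂rademacher, x = -1 ∨ x = 1 := by
  simp [rademacher, ae_add_measure_iff]

lemma integral_rademacher {E : Type*} [NormedAddCommGroup E] [NormedSpace ℝ E] [CompleteSpace E]
    (g : ℝ → E) :
    ∫ x, g x ∂rademacher = (2⁻¹ : ℝ) • (g (-1) + g 1) := by
  rw [rademacher, integral_smul_measure, integral_add_measure (integrable_dirac enorm_lt_top)
    (integrable_dirac enorm_lt_top), integral_dirac, integral_dirac]
  simp

lemma charFun_rademacher (t : ℝ) : charFun rademacher t = Real.cos t := by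
  rw [charFun_apply_real, integral_rademacher, Complex.ofReal_cos, Complex.cos, Complex.real_smul]
  push_cast
  ring_nf

section MapEqRademacher

variable {Ω : Type*} {mΩ : MeasurableSpace Ω} {μ : Measure Ω} {X : Ω → ℝ}

lemma ae_eq_neg_one_or_one_of_map_eq_rademacher (hX : AEMeasurable X μ)
    (hlaw : μ.map X = rademacher) : ∀ᵐ ω ∂μ, X ω = -1 ∨ X ω = 1 :=
  ae_of_ae_map hX (hlaw ▸ ae_rademacher)

lemma memLp_of_map_eq_rademacher (hX : AEMeasurable X μ) [IsFiniteMeasure μ]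
    (hlaw : μ.map X = rademacher) (p : ℝ≥0∞) : MemLp X p μ := by
  refine MemLp.of_bound hX.aestronglyMeasurable 1 ?_
  filter_upwards [ae_eq_neg_one_or_one_of_map_eq_rademacher hX hlaw] with ω hω
  rcases hω with h | h <;> simp [h]

lemma integral_eq_zero_of_map_eq_rademacher (hX : AEMeasurable X μ)
    (hlaw : μ.map X = rademacher) : μ[X] = 0 := by
  rw [show μ[X] = ∫ ω, id (X ω) ∂μ from rfl, ← integral_map hX aestronglyMeasurable_id, hlaw,
    integral_rademacher]
  norm_num

lemma variance_eq_one_of_map_eq_rademacher (hX : AEMeasurable X μ) [IsProbabilityMeasure μ]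
    (hlaw : μ.map X = rademacher) : Var[X; μ] = 1 := by
  rw [variance_of_integral_eq_zero hX (integral_eq_zero_of_map_eq_rademacher hX hlaw),
    integral_congr_ae (g := fun _ ↦ 1)]
  · simp
  filter_upwards [ae_eq_neg_one_or_one_of_map_eq_rademacher hX hlaw] with ω hω
  rcases hω with h | h <;> simp [h]

end MapEqRademacher

section IndependentSeries

variable {Ω : Type*} {mΩ : MeasurableSpace Ω} {μ : Measure Ω} [IsProbabilityMeasure μ]
  {X : ℕ → Ω → ℝ}

lemma martingale_sum_range_succ_of_iIndepFun (hmeas : ∀ n, StronglyMeasurable (X n))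
    (hX : iIndepFun X μ) (hint : ∀ n, Integrable (X n) μ) (hmean : ∀ n, μ[X n] = 0) :
    Martingale (fun N ↦ ∑ n ∈ range (N + 1), X n) (Filtration.natural X hmeas) μ := by
  refine martingale_of_condExp_sub_eq_zero_nat (fun N ↦ ?_)
    (fun N ↦ integrable_finsetSum' _ fun n _ ↦ hint n) fun N ↦ ?_
  · exact stronglyMeasurable_sum _ fun n hn ↦ (Filtration.stronglyAdapted_natural hmeas n).mono
      ((Filtration.natural X hmeas).mono (Nat.lt_succ_iff.mp (mem_range.mp hn)))
  · simp only [sum_range_succ _ (N + 1), add_sub_cancel_left]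
    exact (hX.condExp_natural_ae_eq_of_lt hmeas N.lt_succ_self).trans (by simp [hmean]; rfl)

lemma eLpNorm_one_le_one_add_variance_div_two {Y : Ω → ℝ} (hY : MemLp Y 2 μ) (hmean : μ[Y] = 0) :
    eLpNorm Y 1 μ ≤ ENNReal.ofReal ((1 + Var[Y; μ]) / 2) := by
  rw [eLpNorm_one_eq_lintegral_enorm, ← ofReal_integral_norm_eq_lintegral_enorm
    (hY.integrable one_le_two), variance_of_integral_eq_zero hY.aemeasurable hmean]
  refine ENNReal.ofReal_le_ofReal ?_
  have hsq := hY.integrable_sq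
  calc ∫ ω, ‖Y ω‖ ∂μ ≤ ∫ ω, (1 + Y ω ^ 2) / 2 ∂μ :=
        integral_mono (hY.integrable one_le_two).norm (((integrable_const 1).add hsq).div_const 2)
          fun ω ↦ by nlinarith [sq_nonneg (|Y ω| - 1), sq_abs (Y ω), Real.norm_eq_abs (Y ω)]
    _ = (1 + ∫ ω, Y ω ^ 2 ∂μ) / 2 := by
        rw [integral_div, integral_add (integrable_const 1) hsq, integral_const]
        simp

theorem ae_exists_tendsto_sum_of_summable_variance (hmeas : ∀ n, StronglyMeasurable (X n))
    (hX : iIndepFun X μ) (hL2 : ∀ n, MemLp (X n) 2 μ) (hmean : ∀ n, μ[X n] = 0)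
    (hvar : Summable fun n ↦ Var[X n; μ]) :
    ∀ᵐ ω ∂μ, ∃ L, Tendsto (fun N ↦ ∑ n ∈ range N, X n ω) atTop (𝓝 L) := by
  have hmart := martingale_sum_range_succ_of_iIndepFun hmeas hX
    (fun n ↦ (hL2 n).integrable one_le_two) hmean
  have hbdd (N : ℕ) : eLpNorm (∑ n ∈ range (N + 1), X n) 1 μ ≤
      ENNReal.ofReal ((1 + ∑' n, Var[X n; μ]) / 2) := by
    refine (eLpNorm_one_le_one_add_variance_div_two (memLp_finsetSum' _ fun n _ ↦ hL2 n) ?_).trans ?_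
    · simp only [Finset.sum_apply]
      rw [integral_finsetSum _ fun n _ ↦ (hL2 n).integrable one_le_two]
      simp [hmean]
    refine ENNReal.ofReal_le_ofReal ?_
    rw [IndepFun.variance_sum (fun n _ ↦ hL2 n) fun i _ j _ hij ↦ hX.indepFun hij]
    gcongr
    exact hvar.sum_le_tsum _ fun n _ ↦ variance_nonneg _ _
  filter_upwards [hmart.submartingale.exists_ae_tendsto_of_bdd hbdd] with ω ⟨L, hL⟩
  exact ⟨L, (tendsto_add_atTop_iff_nat 1).1 (by simpa using hL)⟩

end IndependentSeries

lemma tendsto_charFun_map_of_ae_tendsto {Ω E : Type*} {mΩ : MeasurableSpace Ω} {μ : Measure Ω}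
    [IsFiniteMeasure μ] [NormedAddCommGroup E] [InnerProductSpace ℝ E] [MeasurableSpace E]
    [OpensMeasurableSpace E]
    {Y : ℕ → Ω → E} {Z : Ω → E} (hY : ∀ N, AEMeasurable (Y N) μ) (hZ : AEMeasurable Z μ)
    (h : ∀ᵐ ω ∂μ, Tendsto (fun N ↦ Y N ω) atTop (𝓝 (Z ω))) (t : E) :
    Tendsto (fun N ↦ charFun (μ.map (Y N)) t) atTop (𝓝 (charFun (μ.map Z) t)) := by
  have hc : Continuous fun x : E ↦ Complex.exp (inner ℝ x t * Complex.I) := by fun_prop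
  simp only [charFun_apply, integral_map (hY _) hc.aestronglyMeasurable,
    integral_map hZ hc.aestronglyMeasurable]
  refine tendsto_integral_of_dominated_convergence (fun _ ↦ 1)
    (fun N ↦ (hc.measurable.comp_aemeasurable (hY N)).aestronglyMeasurable)
    (integrable_const 1) (fun N ↦ ae_of_all _ fun ω ↦ by simp [Complex.norm_exp_ofReal_mul_I])
    ?_
  filter_upwards [h] with ω hω
  exact ((hω.inner tendsto_const_nhds).ofReal.mul_const _).cexp

section RademacherSeries

variable {Ω : Type*} {mΩ : MeasurableSpace Ω} {μ : Measure Ω} {X : ℕ → Ω → ℝ}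

lemma charFun_map_sum_mul_eq_prod_cos
    (hmeas : ∀ n, Measurable (X n)) (hX : iIndepFun X μ) (hlaw : ∀ n, μ.map (X n) = rademacher)
    (a : ℕ → ℝ) (N : ℕ) (t : ℝ) :
    charFun (μ.map fun ω ↦ ∑ n ∈ range N, a n * X n ω) t =
      ((∏ n ∈ range N, Real.cos (a n * t) : ℝ) : ℂ) := by
  have haX : iIndepFun (fun n ω ↦ a n * X n ω) μ :=
    hX.comp (fun n y ↦ a n * y) fun n ↦ measurable_const_mul (a n)
  rw [(haX.restrict _).charFun_map_fun_finsetSum_eq_prod (fun n _ ↦ by fun_prop)]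
  simp [prod_apply, charFun_map_mul_comp (hmeas _).aemeasurable, hlaw, charFun_rademacher]

theorem summable_sq_of_ae_exists_tendsto_sum_mul [IsProbabilityMeasure μ]
    (hmeas : ∀ n, Measurable (X n)) (hX : iIndepFun X μ) (hlaw : ∀ n, μ.map (X n) = rademacher)
    (a : ℕ → ℝ)
    (h : ∀ᵐ ω ∂μ, ∃ L, Tendsto (fun N ↦ ∑ n ∈ range N, a n * X n ω) atTop (𝓝 L)) :
    Summable fun n ↦ a n ^ 2 := by
  set S := fun N ω ↦ ∑ n ∈ range N, a n * X n ω
  have hS (N : ℕ) : AEMeasurable (S N) μ := by fun_prop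
  have hlim : ∀ᵐ ω ∂μ, Tendsto (S · ω) atTop (𝓝 (limUnder atTop (S · ω))) := by
    filter_upwards [h] with ω ⟨L, hL⟩
    exact hL.limUnder_eq ▸ hL
  set Z := fun ω ↦ limUnder atTop (S · ω)
  have hZ : AEMeasurable Z μ := aemeasurable_of_tendsto_metrizable_ae atTop hS hlim
  refine summable_sq_of_tendsto_prod_cos (φ := fun t ↦ (charFun (μ.map Z) t).re)
    (Complex.continuous_re.comp continuous_charFun).continuousAt ?_ fun t ↦ ?_
  · have := Measure.isProbabilityMeasure_map hZ
    simp [charFun_zero]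
  · have := Complex.continuous_re.continuousAt.tendsto.comp
      (tendsto_charFun_map_of_ae_tendsto hS hZ hlim t)
    simpa only [Function.comp_def, S, charFun_map_sum_mul_eq_prod_cos hmeas hX hlaw,
      Complex.ofReal_re] using this

theorem ae_exists_tendsto_sum_mul_of_summable_sq [IsProbabilityMeasure μ]
    (hmeas : ∀ n, Measurable (X n)) (hX : iIndepFun X μ) (hlaw : ∀ n, μ.map (X n) = rademacher)
    (a : ℕ → ℝ) (ha : Summable fun n ↦ a n ^ 2) :
    ∀ᵐ ω ∂μ, ∃ L, Tendsto (fun N ↦ ∑ n ∈ range N, a n * X n ω) atTop (𝓝 L) := by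
  refine ae_exists_tendsto_sum_of_summable_variance (X := fun n ω ↦ a n * X n ω)
    (fun n ↦ ((hmeas n).const_mul (a n)).stronglyMeasurable)
    (hX.comp (fun n y ↦ a n * y) fun n ↦ measurable_const_mul (a n))
    (fun n ↦ (memLp_of_map_eq_rademacher (hmeas n).aemeasurable (hlaw n) 2).const_mul (a n))
    (fun n ↦ ?_) ?_
  · rw [integral_const_mul,
      integral_eq_zero_of_map_eq_rademacher (hmeas n).aemeasurable (hlaw n), mul_zero]
  · simpa [variance_const_mul,
      fun n ↦ variance_eq_one_of_map_eq_rademacher (hmeas n).aemeasurable (hlaw n)] using ha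

end RademacherSeries

/-- For the Bernoulli product measure on `ℝ^ℕ` (coordinates i.i.d. taking values `±1`
with probability `1/2` each), the series `Σ f n * x n` converges for almost every `x`
iff `f ∈ ℓ²`. -/
theorem bernoulli_series_converges_ae_iff_l2
    (μ : Measure (ℕ → ℝ)) [IsProbabilityMeasure μ]
    (hIndep : ProbabilityTheory.iIndepFun
      (fun n => fun x : ℕ → ℝ => x n) μ)
    (hdist : ∀ n : ℕ, Measure.map (fun x : ℕ → ℝ => x n) μ
      = (2⁻¹ : ℝ≥0∞) • (Measure.dirac (-1 : ℝ) + Measure.dirac (1 : ℝ)))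
    (f : ℕ → ℝ) :
    (∀ᵐ x ∂μ, ∃ L : ℝ,
        Tendsto (fun N : ℕ => ∑ n ∈ Finset.range N, f n * x n) atTop (𝓝 L))
      ↔ Summable (fun n => f n ^ 2) :=
  ⟨summable_sq_of_ae_exists_tendsto_sum_mul measurable_pi_apply hIndep hdist f,
    ae_exists_tendsto_sum_mul_of_summable_sq measurable_pi_apply hIndep hdist f⟩
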